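/- arXiv:1903.06573 — 10 statements merged into one kernel-verified Lean document; each statement's English description precedes it below -/
import Mathlib

section
/- Let A : H → F be a bounded operator and W : F → F positive semidefinite. The equation Az = x admits a W-least-squares solution for every x ∈ F if and only if R(A) + W(R(A))^⊥ = F, where W(R(A))^⊥ is the orthogonal complement of the image W(R(A)). -/
/-!
For `e = A u - x`, the competitors `A z - x` are exactly `e + v` with `v ∈ R(A)`. Expanding the
quadratic form of the symmetric operator `W`,
`⟪W (e + v), e + v⟫ = ⟪W e, e⟫ + 2 re ⟪W e, v⟫ + ⟪W v, v⟫` with `⟪W v, v⟫ ≥ 0`; scaling `v` by real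
`t` shows that `e` minimizes iff `re ⟪W e, v⟫ = 0` on `R(A)`, i.e. iff `e ⊥ W(R(A))`. So a
least-squares solution exists for `x` iff `x = A u - e` with `e ∈ W(R(A))ᗮ`.
-/

open RCLike

theorem eq_zero_of_forall_nonneg_two_mul_add_sq_mul {a b : ℝ}
    (h : ∀ t : ℝ, 0 ≤ 2 * t * a + t ^ 2 * b) : a = 0 := by
  have hd := discrim_le_zero (a := b) (b := 2 * a) (c := 0) fun t => by nlinarith [h t]
  rw [discrim] at hd
  nlinarith

section

variable {𝕜 E : Type*} [RCLike 𝕜] [NormedAddCommGroup E] [InnerProductSpace 𝕜 E]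

namespace Submodule

theorem mem_orthogonal_iff_forall_re_inner_eq_zero {K : Submodule 𝕜 E} {v : E} :
    v ∈ Kᗮ ↔ ∀ u ∈ K, re (inner 𝕜 u v) = 0 := by
  refine ⟨fun hv u hu => by rw [(mem_orthogonal K v).1 hv u hu, map_zero], fun h u hu => ?_⟩
  -- pairing `v` with `⟪u, v⟫ • u ∈ K` gives `‖⟪u, v⟫‖ ^ 2`
  have hsq := h (inner 𝕜 u v • u) (K.smul_mem _ hu)
  rw [inner_smul_left, RCLike.conj_mul, ← ofReal_pow, ofReal_re] at hsq
  simpa using hsq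

end Submodule

namespace LinearMap

theorem IsSymmetric.re_inner_map_add_add {T : E →ₗ[𝕜] E} (hT : T.IsSymmetric) (e v : E) :
    re (inner 𝕜 (T (e + v)) (e + v)) =
      re (inner 𝕜 (T e) e) + 2 * re (inner 𝕜 (T e) v) + re (inner 𝕜 (T v) v) := by
  have hre : re (inner 𝕜 (T v) e) = re (inner 𝕜 (T e) v) := by
    rw [hT v e, ← inner_conj_symm, conj_re]
  simp only [map_add, inner_add_left, inner_add_right, hre]
  ring

theorem IsPositive.forall_le_re_inner_map_add_iff {T : E →ₗ[𝕜] E} (hT : T.IsPositive)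
    (K : Submodule 𝕜 E) (e : E) :
    (∀ v ∈ K, re (inner 𝕜 (T e) e) ≤ re (inner 𝕜 (T (e + v)) (e + v))) ↔
      e ∈ (K.map T)ᗮ := by
  have hperp : e ∈ (K.map T)ᗮ ↔ ∀ v ∈ K, re (inner 𝕜 (T e) v) = 0 := by
    simp only [Submodule.mem_orthogonal_iff_forall_re_inner_eq_zero, Submodule.mem_map,
      forall_exists_index, and_imp, forall_apply_eq_imp_iff₂]
    refine forall₂_congr fun v _ => ?_
    rw [hT.isSymmetric v e, ← inner_conj_symm, conj_re]
  simp only [hperp, hT.isSymmetric.re_inner_map_add_add]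
  refine ⟨fun h v hv => ?_, fun h v hv => ?_⟩
  · refine eq_zero_of_forall_nonneg_two_mul_add_sq_mul (b := re (inner 𝕜 (T v) v)) fun t => ?_
    have ht := h ((t : 𝕜) • v) (K.smul_mem _ hv)
    simp only [map_smul, inner_smul_left, inner_smul_right, conj_ofReal, re_ofReal_mul] at ht
    nlinarith
  · rw [h v hv]
    linarith [hT.re_inner_nonneg_left v]

theorem IsPositive.forall_re_inner_map_sub_le_iff {H : Type*} [AddCommGroup H] [Module 𝕜 H]
    {T : E →ₗ[𝕜] E} (hT : T.IsPositive) (A : H →ₗ[𝕜] E) (x : E) (u : H) :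
    (∀ z, re (inner 𝕜 (T (A u - x)) (A u - x)) ≤ re (inner 𝕜 (T (A z - x)) (A z - x))) ↔
      A u - x ∈ ((range A).map T)ᗮ := by
  rw [← hT.forall_le_re_inner_map_add_iff]
  refine ⟨?_, fun h z => ?_⟩
  · rintro h _ ⟨w, rfl⟩
    have hshift : A (u + w) - x = A u - x + A w := by rw [map_add]; abel
    simpa only [hshift] using h (u + w)
  · have hshift : A u - x + A (z - u) = A z - x := by rw [map_sub]; abel
    simpa only [hshift] using h (A (z - u)) ⟨z - u, rfl⟩

end LinearMap

end

theorem stmt_1_general {H F : Type*} [NormedAddCommGroup H] [InnerProductSpace ℂ H]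
    [NormedAddCommGroup F] [InnerProductSpace ℂ F]
    (A : H →L[ℂ] F) (W : F →L[ℂ] F) (hW : W.IsPositive) :
    (∀ x : F, ∃ u : H, ∀ z : H,
        (inner ℂ (W (A u - x)) (A u - x) : ℂ).re ≤ (inner ℂ (W (A z - x)) (A z - x) : ℂ).re) ↔
      LinearMap.range (A : H →ₗ[ℂ] F) ⊔ (Submodule.map (W : F →ₗ[ℂ] F) (LinearMap.range (A : H →ₗ[ℂ] F)))ᗮ = ⊤ := by
  have hmin := hW.toLinearMap.forall_re_inner_map_sub_le_iff (A : H →ₗ[ℂ] F)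
  simp only [RCLike.re_to_complex, ContinuousLinearMap.coe_coe] at hmin
  simp only [hmin, Submodule.sup_eq_top_iff]
  refine ⟨fun h x => ?_, fun h x => ?_⟩
  · obtain ⟨u, hu⟩ := h x
    exact ⟨A u, ⟨u, rfl⟩, -(A u - x), neg_mem hu, by abel⟩
  · obtain ⟨_, ⟨u, rfl⟩, v, hv, rfl⟩ := h x
    exact ⟨u, by simpa using neg_mem hv⟩

/-- `A z = x` has a `W`-least-squares solution for every `x` iff `R(A) + W(R(A))^⊥ = F`. -/
theorem stmt_1 {H F : Type*} [NormedAddCommGroup H] [InnerProductSpace ℂ H] [CompleteSpace H]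
    [NormedAddCommGroup F] [InnerProductSpace ℂ F] [CompleteSpace F]
    [TopologicalSpace.SeparableSpace H] [TopologicalSpace.SeparableSpace F]
    (A : H →L[ℂ] F) (W : F →L[ℂ] F) (hW : W.IsPositive) :
    (∀ x : F, ∃ u : H, ∀ z : H,
        (inner ℂ (W (A u - x)) (A u - x) : ℂ).re ≤ (inner ℂ (W (A z - x)) (A z - x) : ℂ).re) ↔
      LinearMap.range (A : H →ₗ[ℂ] F) ⊔ (Submodule.map (W : F →ₗ[ℂ] F) (LinearMap.range (A : H →ₗ[ℂ] F)))ᗮ = ⊤ :=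
  stmt_1_general A W hW
end

section
/- Let A : H → F be bounded and W : F → F positive semidefinite. There exists a bounded operator G : F → H such that Gx is a W-least-squares solution of Az = x for every x ∈ F (a W-inverse of A) if and only if the normal equation A*W(AX − I) = 0 admits a bounded operator solution X ∈ L(F,H). Moreover, the set of W-inverses of A coincides with the set of bounded solutions of this normal equation. -/
/-!
For the residual `e = A u - x` one has
`‖e + A h‖_W² = ‖e‖_W² + 2 Re ⟪W e, A h⟫ + ‖A h‖_W²` since `W` is symmetric.
If `u` minimises `z ↦ ‖A z - x‖_W²`, then along each line `t ↦ u + t h` the quadratic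
`2 t Re ⟪A* W e, h⟫ + t² ‖A h‖_W²` is nonnegative, so its discriminant forces the linear
coefficient to vanish; hence `A* W e = 0`. Conversely, if `A* W e = 0` the increment is
`‖A h‖_W² ≥ 0` by positivity of `W`. Applying this at `u = G x` for every `x` turns the
minimising property of `G` into the operator equation `A* W (A G - I) = 0`.
-/

open ContinuousLinearMap RCLike

section

variable {𝕜 E F : Type*} [RCLike 𝕜]
  [NormedAddCommGroup E] [InnerProductSpace 𝕜 E] [NormedAddCommGroup F] [InnerProductSpace 𝕜 F]

local notation "⟪" x ", " y "⟫" => inner 𝕜 x y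

theorem ContinuousLinearMap.reApplyInnerSelf_add_of_isSymmetric {T : E →L[𝕜] E}
    (hT : (T : E →ₗ[𝕜] E).IsSymmetric) (x y : E) :
    T.reApplyInnerSelf (x + y) = T.reApplyInnerSelf x + 2 * re ⟪T x, y⟫ + T.reApplyInnerSelf y := by
  have hswap : re ⟪T y, x⟫ = re ⟪T x, y⟫ := by
    rw [← coe_coe, hT y x, inner_re_symm, coe_coe]
  simp only [reApplyInnerSelf_apply, map_add, inner_add_left, inner_add_right, hswap]
  ring

theorem ContinuousLinearMap.re_inner_eq_zero_of_forall_le_add_smul {T : E →L[𝕜] E}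
    (hT : (T : E →ₗ[𝕜] E).IsSymmetric) {x y : E}
    (hmin : ∀ t : ℝ, T.reApplyInnerSelf x ≤ T.reApplyInnerSelf (x + (t : 𝕜) • y)) :
    re ⟪T x, y⟫ = 0 := by
  have hquad : ∀ t : ℝ, 0 ≤ T.reApplyInnerSelf y * (t * t) + 2 * re ⟪T x, y⟫ * t + 0 := by
    intro t
    have := hmin t
    rw [reApplyInnerSelf_add_of_isSymmetric hT, reApplyInnerSelf_smul, inner_smul_right,
      re_ofReal_mul, norm_ofReal, sq_abs] at this
    linarith
  have hdiscrim := discrim_le_zero hquad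
  rw [discrim] at hdiscrim
  nlinarith [sq_nonneg (re ⟪T x, y⟫)]

def IsLeastSquaresSolution (W : F →L[𝕜] F) (A : E →L[𝕜] F) (x : F) (u : E) : Prop :=
  ∀ z, W.reApplyInnerSelf (A u - x) ≤ W.reApplyInnerSelf (A z - x)

def IsWInverse (W : F →L[𝕜] F) (A : E →L[𝕜] F) (G : F →L[𝕜] E) : Prop :=
  ∀ x, IsLeastSquaresSolution W A x (G x)

variable [CompleteSpace E] [CompleteSpace F] {W : F →L[𝕜] F}

theorem ContinuousLinearMap.IsPositive.isLeastSquaresSolution_iff (hW : W.IsPositive)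
    (A : E →L[𝕜] F) (x : F) (u : E) :
    IsLeastSquaresSolution W A x u ↔ adjoint A (W (A u - x)) = 0 := by
  have hresidual : ∀ h, A (u + h) - x = (A u - x) + A h := fun h => by
    rw [map_add]; abel
  have hmin_iff : IsLeastSquaresSolution W A x u ↔
      ∀ h, W.reApplyInnerSelf (A u - x) ≤ W.reApplyInnerSelf ((A u - x) + A h) := by
    refine ⟨fun hmin h => hresidual h ▸ hmin (u + h), fun hmin z => ?_⟩
    simpa only [← hresidual, add_sub_cancel] using hmin (z - u)
  rw [hmin_iff]
  constructor
  · intro hmin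
    have horth : ∀ h, re ⟪adjoint A (W (A u - x)), h⟫ = 0 := fun h => by
      rw [adjoint_inner_left]
      refine re_inner_eq_zero_of_forall_le_add_smul hW.isSymmetric fun t => ?_
      simpa only [map_smul] using hmin ((t : 𝕜) • h)
    exact re_inner_self_nonpos.mp (horth _).le
  · intro hnormal h
    rw [reApplyInnerSelf_add_of_isSymmetric hW.isSymmetric, ← adjoint_inner_left, hnormal,
      inner_zero_left, map_zero]
    linarith [hW.2 (A h)]

theorem ContinuousLinearMap.IsPositive.isWInverse_iff (hW : W.IsPositive) (A : E →L[𝕜] F)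
    (G : F →L[𝕜] E) :
    IsWInverse W A G ↔ adjoint A ∘L (W ∘L (A ∘L G - ContinuousLinearMap.id 𝕜 F)) = 0 := by
  simp only [IsWInverse, hW.isLeastSquaresSolution_iff, ContinuousLinearMap.ext_iff]
  rfl

end

theorem stmt_2_general {H F : Type*} [NormedAddCommGroup H] [InnerProductSpace ℂ H] [CompleteSpace H]
    [NormedAddCommGroup F] [InnerProductSpace ℂ F] [CompleteSpace F]
    (A : H →L[ℂ] F) (W : F →L[ℂ] F) (hW : W.IsPositive) :
    ((∃ G : F →L[ℂ] H, ∀ (x : F) (z : H),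
        (inner ℂ (W (A (G x) - x)) (A (G x) - x) : ℂ).re ≤
          (inner ℂ (W (A z - x)) (A z - x) : ℂ).re) ↔
      (∃ X : F →L[ℂ] H,
        ContinuousLinearMap.adjoint A ∘L (W ∘L (A ∘L X - ContinuousLinearMap.id ℂ F)) = 0)) ∧
    (∀ G : F →L[ℂ] H,
      (∀ (x : F) (z : H),
        (inner ℂ (W (A (G x) - x)) (A (G x) - x) : ℂ).re ≤
          (inner ℂ (W (A z - x)) (A z - x) : ℂ).re) ↔
      ContinuousLinearMap.adjoint A ∘L (W ∘L (A ∘L G - ContinuousLinearMap.id ℂ F)) = 0) :=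
  ⟨exists_congr (hW.isWInverse_iff A), hW.isWInverse_iff A⟩

/-- `A` admits a `W`-inverse iff the normal equation `A* W (A X - I) = 0` has a bounded
solution; moreover the `W`-inverses are exactly the solutions of the normal equation. -/
theorem stmt_2 {H F : Type*} [NormedAddCommGroup H] [InnerProductSpace ℂ H] [CompleteSpace H]
    [NormedAddCommGroup F] [InnerProductSpace ℂ F] [CompleteSpace F]
    [TopologicalSpace.SeparableSpace H] [TopologicalSpace.SeparableSpace F]
    (A : H →L[ℂ] F) (W : F →L[ℂ] F) (hW : W.IsPositive) :
    ((∃ G : F →L[ℂ] H, ∀ (x : F) (z : H),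
        (inner ℂ (W (A (G x) - x)) (A (G x) - x) : ℂ).re ≤
          (inner ℂ (W (A z - x)) (A z - x) : ℂ).re) ↔
      (∃ X : F →L[ℂ] H,
        ContinuousLinearMap.adjoint A ∘L (W ∘L (A ∘L X - ContinuousLinearMap.id ℂ F)) = 0)) ∧
    (∀ G : F →L[ℂ] H,
      (∀ (x : F) (z : H),
        (inner ℂ (W (A (G x) - x)) (A (G x) - x) : ℂ).re ≤
          (inner ℂ (W (A z - x)) (A z - x) : ℂ).re) ↔
      ContinuousLinearMap.adjoint A ∘L (W ∘L (A ∘L G - ContinuousLinearMap.id ℂ F)) = 0) :=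
  stmt_2_general A W hW
end

section
/- Let A : H → F be bounded and W : F → F positive semidefinite such that F = R(A) + W(R(A))^⊥ (i.e. A admits a W-inverse). Then R(A) is closed if and only if R(A) ∩ N(W) is closed. -/
/-! For positive `W`, `⟪W x, x⟫ = 0` forces `W x = 0`, so `R(A) ∩ W(R(A))ᗮ = R(A) ∩ N(W)`.
With `N := W(R(A))ᗮ` closed and `R(A) + N = F`, put `K := R(A) ∩ N`; if `K` is closed, then
`Kᗮ ∩ N` is a closed algebraic complement of `R(A)`, and a range with a closed complement is
closed by the open mapping theorem. -/

section

open ContinuousLinearMap Submodule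

variable {𝕜 E F : Type*} [RCLike 𝕜]

theorem ContinuousLinearMap.IsPositive.apply_eq_zero_of_inner_self_eq_zero
    [NormedAddCommGroup E] [InnerProductSpace ℂ E] [CompleteSpace E]
    {W : E →L[ℂ] E} (hW : W.IsPositive) {x : E} (hx : inner ℂ (W x) x = 0) : W x = 0 := by
  have hsqrt : CFC.sqrt W * CFC.sqrt W = W :=
    CFC.sqrt_mul_sqrt_self W ((nonneg_iff_isPositive W).mpr hW)
  have hsa : IsSelfAdjoint (CFC.sqrt W) :=
    ((nonneg_iff_isPositive _).mp (CFC.sqrt_nonneg W)).isSelfAdjoint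
  have hsq : ∀ y, CFC.sqrt W (CFC.sqrt W y) = W y := fun y => congrArg (· y) hsqrt
  have hroot : CFC.sqrt W x = 0 := by
    -- `‖√W x‖² = ⟪W x, x⟫`
    rw [← inner_self_eq_zero (𝕜 := ℂ), ← adjoint_inner_left, hsa.adjoint_eq, hsq, hx]
  rw [← hsq, hroot, map_zero]

theorem ContinuousLinearMap.IsPositive.inf_orthogonal_map_eq_inf_ker
    [NormedAddCommGroup E] [InnerProductSpace ℂ E] [CompleteSpace E]
    {W : E →L[ℂ] E} (hW : W.IsPositive) (M : Submodule ℂ E) :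
    M ⊓ (M.map (W : E →ₗ[ℂ] E))ᗮ = M ⊓ W.ker := by
  ext x
  simp only [mem_inf, mem_orthogonal, mem_map, LinearMap.mem_ker, coe_coe]
  refine and_congr_right fun hxM => ⟨fun hx => ?_, fun hx => ?_⟩
  · exact hW.apply_eq_zero_of_inner_self_eq_zero (hx _ ⟨x, hxM, rfl⟩)
  · rintro _ ⟨m, -, rfl⟩
    rw [hW.inner_left_eq_inner_right, hx, inner_zero_right]

theorem ContinuousLinearMap.isClosed_range_of_isCompl
    [NormedAddCommGroup E] [InnerProductSpace 𝕜 E] [CompleteSpace E]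
    [NormedAddCommGroup F] [NormedSpace 𝕜 F] [CompleteSpace F]
    (T : E →L[𝕜] F) {G : Submodule 𝕜 F} (h : IsCompl T.range G)
    (hG : IsClosed (G : Set F)) : IsClosed (T.range : Set F) := by
  set T' := T.comp T.kerᗮ.subtypeL
  have hrange : T'.range = T.range := by
    refine le_antisymm (LinearMap.range_comp_le_range _ _) ?_
    rintro _ ⟨x, rfl⟩
    obtain ⟨k, hk, y, hy, rfl⟩ := mem_sup.mp
      (sup_orthogonal_of_hasOrthogonalProjection (K := T.ker) ▸ mem_top : x ∈ _)
    exact ⟨⟨y, hy⟩, by simp [T', show T k = 0 from hk]⟩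
  have hker : T'.ker = ⊥ := by
    rw [eq_bot_iff]
    rintro ⟨y, hy⟩ hTy
    exact (mem_bot 𝕜).mpr
      (Subtype.ext (inner_self_eq_zero.mp (inner_left_of_mem_orthogonal hTy hy)))
  rw [← hrange] at h ⊢
  exact T'.closed_complemented_range_of_isCompl_of_ker_eq_bot G h hG hker

theorem ContinuousLinearMap.isClosed_range_of_sup_eq_top_of_isClosed_inf
    [NormedAddCommGroup E] [InnerProductSpace 𝕜 E] [CompleteSpace E]
    [NormedAddCommGroup F] [InnerProductSpace 𝕜 F] [CompleteSpace F]
    (T : E →L[𝕜] F) {N : Submodule 𝕜 F} (hN : IsClosed (N : Set F)) (hsup : T.range ⊔ N = ⊤)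
    (hinf : IsClosed ((T.range ⊓ N : Submodule 𝕜 F) : Set F)) : IsClosed (T.range : Set F) := by
  set K := T.range ⊓ N
  have : CompleteSpace K := hinf.completeSpace_coe
  refine T.isClosed_range_of_isCompl (G := Kᗮ ⊓ N) ⟨?_, ?_⟩ (K.isClosed_orthogonal.inter hN)
  · rw [disjoint_iff, inf_left_comm, inf_comm]
    exact K.inf_orthogonal_eq_bot
  · rw [codisjoint_iff]
    calc T.range ⊔ Kᗮ ⊓ N = T.range ⊔ (K ⊔ Kᗮ ⊓ N) := by
          rw [← sup_assoc, sup_eq_left.mpr (inf_le_left : K ≤ T.range)]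
      _ = ⊤ := by rw [sup_orthogonal_inf_of_hasOrthogonalProjection inf_le_right, hsup]

end

theorem stmt_5_general {H F : Type*} [NormedAddCommGroup H] [InnerProductSpace ℂ H] [CompleteSpace H]
    [NormedAddCommGroup F] [InnerProductSpace ℂ F] [CompleteSpace F]
    (A : H →L[ℂ] F) (W : F →L[ℂ] F) (hW : W.IsPositive)
    (h : LinearMap.range (A : H →ₗ[ℂ] F) ⊔ (Submodule.map (W : F →ₗ[ℂ] F) (LinearMap.range (A : H →ₗ[ℂ] F)))ᗮ = ⊤) :
    IsClosed ((LinearMap.range (A : H →ₗ[ℂ] F) : Submodule ℂ F) : Set F) ↔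
      IsClosed ((LinearMap.range (A : H →ₗ[ℂ] F) ⊓ LinearMap.ker (W : F →ₗ[ℂ] F) : Submodule ℂ F) : Set F) := by
  refine ⟨fun hA => hA.inter W.isClosed_ker, fun hAW => ?_⟩
  rw [← hW.inf_orthogonal_map_eq_inf_ker] at hAW
  exact A.isClosed_range_of_sup_eq_top_of_isClosed_inf (Submodule.isClosed_orthogonal _) h hAW

/-- If `A` admits a `W`-inverse (`R(A) + W(R(A))^⊥ = F`), then `R(A)` is closed iff
`R(A) ∩ N(W)` is closed. -/
theorem stmt_5 {H F : Type*} [NormedAddCommGroup H] [InnerProductSpace ℂ H] [CompleteSpace H]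
    [NormedAddCommGroup F] [InnerProductSpace ℂ F] [CompleteSpace F]
    [TopologicalSpace.SeparableSpace H] [TopologicalSpace.SeparableSpace F]
    (A : H →L[ℂ] F) (W : F →L[ℂ] F) (hW : W.IsPositive)
    (h : LinearMap.range (A : H →ₗ[ℂ] F) ⊔ (Submodule.map (W : F →ₗ[ℂ] F) (LinearMap.range (A : H →ₗ[ℂ] F)))ᗮ = ⊤) :
    IsClosed ((LinearMap.range (A : H →ₗ[ℂ] F) : Submodule ℂ F) : Set F) ↔
      IsClosed ((LinearMap.range (A : H →ₗ[ℂ] F) ⊓ LinearMap.ker (W : F →ₗ[ℂ] F) : Submodule ℂ F) : Set F) :=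
  stmt_5_general A W hW h
end

section
/- Let W : F → F be positive semidefinite, S ⊆ F a closed subspace, and suppose there exists a bounded projection Q (Q² = Q) with range S satisfying WQ = Q*W. Then F = S + S^{⊥_W}, where S^{⊥_W} = { x : ⟨Wx, s⟩ = 0 for all s ∈ S }. Conversely, if F = S + S^{⊥_W}, such a projection Q exists. -/
/-!
If `Q` is an idempotent with range `S`, then `F = S ⊕ ker Q`, and `W Q = Q* W` says exactly that
`ker Q` is `W`-orthogonal to `S`; hence `F = S + S^{⊥_W}`. Conversely, if `F = S + S^{⊥_W}`, then
`K = S^{⊥_W} ⊓ (S ⊓ S^{⊥_W})ᗮ` is a closed complement of `S` inside `S^{⊥_W}`, and the projection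
onto `S` along `K` is bounded by the closed graph theorem and `W`-symmetric.
-/

open ContinuousLinearMap Submodule

namespace ContinuousLinearMap

variable {𝕜 E : Type*} [RCLike 𝕜] [NormedAddCommGroup E] [InnerProductSpace 𝕜 E] [CompleteSpace E]
  {W Q : E →L[𝕜] E}

theorem ker_le_orthogonal_map_range_of_comp_eq_adjoint_comp (h : W ∘L Q = adjoint Q ∘L W) :
    LinearMap.ker (Q : E →ₗ[𝕜] E) ≤
      (map (W : E →ₗ[𝕜] E) (LinearMap.range (Q : E →ₗ[𝕜] E)))ᗮ := by
  intro k (hk : Q k = 0)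
  rw [mem_orthogonal]
  rintro _ ⟨_, ⟨t, rfl⟩, rfl⟩
  calc inner 𝕜 (W (Q t)) k = inner 𝕜 (adjoint Q (W t)) k := by
        rw [← comp_apply W Q, h, comp_apply]
    _ = inner 𝕜 (W t) (Q k) := adjoint_inner_left _ _ _
    _ = 0 := by rw [hk, inner_zero_right]

theorem comp_eq_adjoint_comp_of_ker_le_orthogonal_map_range (hW : IsSelfAdjoint W)
    (hQ : IsIdempotentElem Q)
    (h : LinearMap.ker (Q : E →ₗ[𝕜] E) ≤
      (map (W : E →ₗ[𝕜] E) (LinearMap.range (Q : E →ₗ[𝕜] E)))ᗮ) :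
    W ∘L Q = adjoint Q ∘L W := by
  have inner_eq_inner_apply : ∀ x y, inner 𝕜 (W (Q x)) y = inner 𝕜 (W (Q x)) (Q y) := by
    intro x y
    have hy : y - Q y ∈ LinearMap.ker (Q : E →ₗ[𝕜] E) := by
      show Q (y - Q y) = 0
      rw [map_sub, ← comp_apply Q Q, show Q ∘L Q = Q from hQ.eq, sub_self]
    have := (mem_orthogonal _ _).mp (h hy) (W (Q x)) ⟨Q x, ⟨x, rfl⟩, rfl⟩
    rwa [inner_sub_right, sub_eq_zero] at this
  ext x
  refine ext_inner_right 𝕜 fun y => ?_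
  rw [comp_apply, comp_apply, adjoint_inner_left]
  calc inner 𝕜 (W (Q x)) y = inner 𝕜 (W (Q x)) (Q y) := inner_eq_inner_apply x y
    _ = inner 𝕜 (Q x) (W (Q y)) := hW.isSymmetric _ _
    _ = starRingEnd 𝕜 (inner 𝕜 (W (Q y)) (Q x)) := (inner_conj_symm _ _).symm
    _ = starRingEnd 𝕜 (inner 𝕜 (W (Q y)) x) := by rw [inner_eq_inner_apply y x]
    _ = inner 𝕜 x (W (Q y)) := inner_conj_symm _ _
    _ = inner 𝕜 (W x) (Q y) := (hW.isSymmetric _ _).symm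

end ContinuousLinearMap

namespace Submodule

variable {𝕜 E : Type*} [RCLike 𝕜] [NormedAddCommGroup E] [InnerProductSpace 𝕜 E] [CompleteSpace E]
  {S T : Submodule 𝕜 E}

theorem exists_isClosed_isCompl_le_of_sup_eq_top (hS : IsClosed (S : Set E))
    (hT : IsClosed (T : Set E)) (h : S ⊔ T = ⊤) :
    ∃ K ≤ T, IsClosed (K : Set E) ∧ IsCompl S K := by
  have : CompleteSpace ↥(S ⊓ T) := (hS.inter hT).completeSpace_coe
  refine ⟨T ⊓ (S ⊓ T)ᗮ, inf_le_left, hT.inter (isClosed_orthogonal _), ?_, ?_⟩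
  · rw [disjoint_iff_inf_le, ← (S ⊓ T).inf_orthogonal_eq_bot]
    exact (inf_assoc _ _ _).ge
  · suffices T ≤ S ⊔ T ⊓ (S ⊓ T)ᗮ by
      rw [codisjoint_iff, eq_top_iff, ← h]
      exact sup_le le_sup_left this
    intro x hx
    obtain ⟨n, hn, m, hm, rfl⟩ := (S ⊓ T).exists_add_mem_mem_orthogonal x
    have hmT : m ∈ T := by simpa using T.sub_mem hx (mem_inf.mp hn).2
    exact add_mem_sup (mem_inf.mp hn).1 (mem_inf.mpr ⟨hmT, hm⟩)

end Submodule

/-- Compatibility of `(W, S)`: there is a bounded idempotent `Q` with range `S` and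
`W Q = Q* W` iff `F = S + S^{⊥_W}`. -/
theorem stmt_8 {F : Type*} [NormedAddCommGroup F] [InnerProductSpace ℂ F] [CompleteSpace F]
    (W : F →L[ℂ] F) (hW : W.IsPositive) (S : Submodule ℂ F) (hS : IsClosed (S : Set F)) :
    (∃ Q : F →L[ℂ] F, Q ∘L Q = Q ∧ LinearMap.range (Q : F →ₗ[ℂ] F) = S ∧
        W ∘L Q = ContinuousLinearMap.adjoint Q ∘L W) ↔
      S ⊔ (Submodule.map (W : F →ₗ[ℂ] F) S)ᗮ = ⊤ := by
  constructor
  · rintro ⟨Q, hQ, rfl, hWQ⟩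
    have hcompl := IsIdempotentElem.isTopCompl (f := Q) hQ |>.isCompl
    exact top_unique <| hcompl.sup_eq_top.ge.trans <|
      sup_le_sup_left (ker_le_orthogonal_map_range_of_comp_eq_adjoint_comp hWQ) _
  · intro h
    obtain ⟨K, hKle, hK, hSK⟩ :=
      exists_isClosed_isCompl_le_of_sup_eq_top hS (isClosed_orthogonal _) h
    have hTop := hSK.isTopCompl_of_isClosed hS hK
    refine ⟨S.projectionL K hTop, (isIdempotentElem_projectionL hTop).eq,
      range_projectionL hTop, ?_⟩
    refine comp_eq_adjoint_comp_of_ker_le_orthogonal_map_range hW.isSelfAdjoint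
      (isIdempotentElem_projectionL hTop) ?_
    rwa [range_projectionL, ker_projectionL]
end

section
/- Let T : H → E and V : H → F be bounded operators between Hilbert spaces, and suppose the pair (T*T, N(V)) is compatible, i.e. H = N(V) + (T*T(N(V)))^⊥. Then for every h₀ ∈ H the set sp(T, N(V), h₀) = { h ∈ h₀ + N(V) : ‖Th‖ = min_{z ∈ N(V)} ‖T(h₀ + z)‖ } is nonempty; i.e. the classical abstract spline problem min ‖Th‖ subject to Vh = Vh₀ has a solution for every h₀. -/
/-!
Compatibility lets us write `h₀ = n + m` with `n ∈ N(V)` and `m ⊥ T*T(N(V))`. Then `m` is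
admissible, and for every `w ∈ N(V)` the vectors `T m` and `T w` are orthogonal, since
`⟪T w, T m⟫ = ⟪T*T w, m⟫ = 0`; Pythagoras gives `‖T m‖ ≤ ‖T (m + w)‖`.
-/

open scoped InnerProductSpace

theorem norm_le_norm_add_of_inner_eq_zero {𝕜 E : Type*} [RCLike 𝕜] [NormedAddCommGroup E]
    [InnerProductSpace 𝕜 E] {x y : E} (h : ⟪x, y⟫_𝕜 = 0) : ‖x‖ ≤ ‖x + y‖ := by
  have hsq := norm_add_sq_eq_norm_sq_add_norm_sq_of_inner_eq_zero x y h
  exact (sq_le_sq₀ (norm_nonneg _) (norm_nonneg _)).mp (by nlinarith [sq_nonneg ‖y‖])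

theorem norm_apply_le_norm_apply_add_of_mem_orthogonal_map_adjoint_comp
    {𝕜 H E : Type*} [RCLike 𝕜] [NormedAddCommGroup H] [InnerProductSpace 𝕜 H] [CompleteSpace H]
    [NormedAddCommGroup E] [InnerProductSpace 𝕜 E] [CompleteSpace E]
    (T : H →L[𝕜] E) {K : Submodule 𝕜 H} {m w : H}
    (hm : m ∈ (K.map ((ContinuousLinearMap.adjoint T ∘L T : H →L[𝕜] H) : H →ₗ[𝕜] H))ᗮ)
    (hw : w ∈ K) : ‖T m‖ ≤ ‖T (m + w)‖ := by
  have horth : ⟪T w, T m⟫_𝕜 = 0 := by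
    rw [← ContinuousLinearMap.adjoint_inner_left]
    exact hm _ (Submodule.mem_map_of_mem hw)
  rw [map_add]
  exact norm_le_norm_add_of_inner_eq_zero (𝕜 := 𝕜) (by rw [← inner_conj_symm, horth, map_zero])

theorem stmt_9_general {H E F : Type*} [NormedAddCommGroup H] [InnerProductSpace ℂ H] [CompleteSpace H]
    [NormedAddCommGroup E] [InnerProductSpace ℂ E] [CompleteSpace E]
    [NormedAddCommGroup F] [InnerProductSpace ℂ F]
    (T : H →L[ℂ] E) (V : H →L[ℂ] F)
    (hcomp : LinearMap.ker (V : H →ₗ[ℂ] F) ⊔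
        (Submodule.map ((ContinuousLinearMap.adjoint T ∘L T : H →L[ℂ] H) : H →ₗ[ℂ] H) (LinearMap.ker (V : H →ₗ[ℂ] F)))ᗮ = ⊤) :
    ∀ h₀ : H, ∃ h : H, h - h₀ ∈ LinearMap.ker (V : H →ₗ[ℂ] F) ∧
      ∀ z ∈ LinearMap.ker (V : H →ₗ[ℂ] F), ‖T h‖ ≤ ‖T (h₀ + z)‖ := by
  intro h₀
  obtain ⟨n, hn, m, hm, rfl⟩ := Submodule.mem_sup.mp (hcomp ▸ Submodule.mem_top (x := h₀))
  refine ⟨m, by simpa using neg_mem hn, fun z hz => ?_⟩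
  rw [show n + m + z = m + (n + z) by abel]
  exact norm_apply_le_norm_apply_add_of_mem_orthogonal_map_adjoint_comp T hm (add_mem hn hz)

/-- If the pair `(T*T, N(V))` is compatible, the abstract spline problem has a solution for
every `h₀`. -/
theorem stmt_9 {H E F : Type*} [NormedAddCommGroup H] [InnerProductSpace ℂ H] [CompleteSpace H]
    [NormedAddCommGroup E] [InnerProductSpace ℂ E] [CompleteSpace E]
    [NormedAddCommGroup F] [InnerProductSpace ℂ F] [CompleteSpace F]
    [TopologicalSpace.SeparableSpace H] [TopologicalSpace.SeparableSpace E]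
    [TopologicalSpace.SeparableSpace F]
    (T : H →L[ℂ] E) (V : H →L[ℂ] F)
    (hcomp : LinearMap.ker (V : H →ₗ[ℂ] F) ⊔
        (Submodule.map ((ContinuousLinearMap.adjoint T ∘L T : H →L[ℂ] H) : H →ₗ[ℂ] H) (LinearMap.ker (V : H →ₗ[ℂ] F)))ᗮ = ⊤) :
    ∀ h₀ : H, ∃ h : H, h - h₀ ∈ LinearMap.ker (V : H →ₗ[ℂ] F) ∧
      ∀ z ∈ LinearMap.ker (V : H →ₗ[ℂ] F), ‖T h‖ ≤ ‖T (h₀ + z)‖ :=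
  stmt_9_general T V hcomp
end

section
/- Let T : H → E, V : H → F be bounded operators. There exists a bounded operator G : H → H with Gh ∈ sp(T, N(V), h) for every h ∈ H (a bounded global solution of the spline problem) if and only if the pair (T*T, N(V)) is compatible, i.e. H = N(V) + (T*T(N(V)))^⊥. -/
/-! With `N = ker V`, a point `k ∈ h + N` minimises `‖T k‖` exactly when `T k ⊥ T(N)`, that is,
when `k` lies in `M = (T*T(N))ᗮ`. A global solution is therefore a map `G` with
`G h ∈ (h + N) ∩ M`, and its existence forces `H = N + M`. Conversely, if `H = N + M`, the closed
subspace `(N ⊓ M)ᗮ ⊓ M` is an algebraic complement of `N`, so by the open mapping theorem the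
projection onto it along `N` is bounded, and it is a global solution. -/

namespace Submodule

variable {𝕜 E F : Type*} [RCLike 𝕜] [NormedAddCommGroup E] [InnerProductSpace 𝕜 E]
  [NormedAddCommGroup F] [InnerProductSpace 𝕜 F]

theorem mem_orthogonal_iff_forall_norm_le_norm_add (K : Submodule 𝕜 E) (a : E) :
    a ∈ Kᗮ ↔ ∀ w ∈ K, ‖a‖ ≤ ‖a + w‖ := by
  have hbdd : BddBelow (Set.range fun w : K => ‖a - w‖) := ⟨0, by simp [lowerBounds]⟩
  have hmin : ‖a‖ = ⨅ w : K, ‖a - w‖ ↔ ∀ w ∈ K, ‖a‖ ≤ ‖a + w‖ := by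
    constructor
    · intro h w hw
      simpa [h, sub_eq_add_neg] using ciInf_le hbdd ⟨-w, K.neg_mem hw⟩
    · intro h
      refine le_antisymm (le_ciInf fun w => ?_) (by simpa using ciInf_le hbdd 0)
      simpa [sub_eq_add_neg] using h _ (K.neg_mem w.2)
  simpa [mem_orthogonal', hmin] using (K.norm_eq_iInf_iff_inner_eq_zero (u := a) K.zero_mem).symm

theorem apply_mem_orthogonal_map_iff (T : F →ₗ[𝕜] E) (N : Submodule 𝕜 F) (k : F) :
    T k ∈ (N.map T)ᗮ ↔ ∀ w ∈ N, ‖T k‖ ≤ ‖T (k + w)‖ := by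
  simp [mem_orthogonal_iff_forall_norm_le_norm_add]

theorem orthogonal_map_adjoint [CompleteSpace E] [CompleteSpace F] (A : E →L[𝕜] F)
    (K : Submodule 𝕜 F) :
    (K.map (ContinuousLinearMap.adjoint A : F →ₗ[𝕜] E))ᗮ = Kᗮ.comap (A : E →ₗ[𝕜] F) := by
  ext x
  simp [mem_orthogonal, ContinuousLinearMap.adjoint_inner_left]

theorem isCompl_orthogonal_inf_inf {N M : Submodule 𝕜 E} [(N ⊓ M).HasOrthogonalProjection]
    (hNM : N ⊔ M = ⊤) : IsCompl N ((N ⊓ M)ᗮ ⊓ M) := by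
  refine ⟨?_, ?_⟩
  · rw [disjoint_iff, ← inf_assoc, inf_right_comm, inf_orthogonal_eq_bot]
  · rw [codisjoint_iff, ← hNM]
    conv_rhs => rw [← sup_orthogonal_inf_of_hasOrthogonalProjection (inf_le_right : N ⊓ M ≤ M)]
    rw [← sup_assoc, sup_inf_self]

theorem exists_continuousLinearMap_apply_mem_and_apply_sub_mem [CompleteSpace E]
    {N M : Submodule 𝕜 E} (hN : IsClosed (N : Set E)) (hM : IsClosed (M : Set E))
    (hNM : N ⊔ M = ⊤) : ∃ G : E →L[𝕜] E, ∀ x, G x ∈ M ∧ G x - x ∈ N := by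
  have : CompleteSpace ↥(N ⊓ M) := (hN.inter hM).completeSpace_coe
  have hcompl : IsTopCompl ((N ⊓ M)ᗮ ⊓ M) N :=
    IsCompl.isTopCompl_of_isClosed (isCompl_orthogonal_inf_inf hNM).symm
      ((isClosed_orthogonal _).inter hM) hN
  refine ⟨projectionL _ _ hcompl, fun x => ⟨(projectionL_apply_mem hcompl x).2, ?_⟩⟩
  rw [← neg_sub, ← projectionL_eq_self_sub_projectionL]
  exact N.neg_mem (projectionL_apply_mem _ x)

end Submodule

theorem stmt_10_general {H E F : Type*} [NormedAddCommGroup H] [InnerProductSpace ℂ H] [CompleteSpace H]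
    [NormedAddCommGroup E] [InnerProductSpace ℂ E] [CompleteSpace E]
    [NormedAddCommGroup F] [InnerProductSpace ℂ F]
    (T : H →L[ℂ] E) (V : H →L[ℂ] F) :
    (∃ G : H →L[ℂ] H, ∀ h : H, G h - h ∈ LinearMap.ker (V : H →ₗ[ℂ] F) ∧
        ∀ z ∈ LinearMap.ker (V : H →ₗ[ℂ] F), ‖T (G h)‖ ≤ ‖T (h + z)‖) ↔
      LinearMap.ker (V : H →ₗ[ℂ] F) ⊔
        (Submodule.map ((ContinuousLinearMap.adjoint T ∘L T : H →L[ℂ] H) : H →ₗ[ℂ] H) (LinearMap.ker (V : H →ₗ[ℂ] F)))ᗮ = ⊤ := by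
  set N := LinearMap.ker (V : H →ₗ[ℂ] F)
  rw [ContinuousLinearMap.toLinearMap_comp, Submodule.map_comp, Submodule.orthogonal_map_adjoint]
  have spline_iff (h k : H) (hk : k - h ∈ N) :
      (∀ z ∈ N, ‖T k‖ ≤ ‖T (h + z)‖) ↔ k ∈ (N.map (T : H →ₗ[ℂ] E))ᗮ.comap (T : H →ₗ[ℂ] E) := by
    rw [Submodule.mem_comap, Submodule.apply_mem_orthogonal_map_iff, ContinuousLinearMap.coe_coe]
    constructor
    · intro hmin w hw
      convert hmin _ (N.add_mem hk hw) using 3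
      abel
    · intro hmin z hz
      convert hmin _ (N.sub_mem hz hk) using 3
      abel
  constructor
  · rintro ⟨G, hG⟩
    refine eq_top_iff.2 fun h _ => ?_
    obtain ⟨hGN, hmin⟩ := hG h
    simpa using Submodule.add_mem_sup (N.neg_mem hGN) ((spline_iff h (G h) hGN).1 hmin)
  · intro hNM
    obtain ⟨G, hG⟩ := Submodule.exists_continuousLinearMap_apply_mem_and_apply_sub_mem
      (ContinuousLinearMap.isClosed_ker V)
      ((Submodule.isClosed_orthogonal _).preimage T.continuous) hNM
    exact ⟨G, fun h => ⟨(hG h).2, (spline_iff h (G h) (hG h).2).2 (hG h).1⟩⟩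

/-- There is a bounded global solution of the spline problem iff the pair `(T*T, N(V))` is
compatible. -/
theorem stmt_10 {H E F : Type*} [NormedAddCommGroup H] [InnerProductSpace ℂ H] [CompleteSpace H]
    [NormedAddCommGroup E] [InnerProductSpace ℂ E] [CompleteSpace E]
    [NormedAddCommGroup F] [InnerProductSpace ℂ F] [CompleteSpace F]
    [TopologicalSpace.SeparableSpace H] [TopologicalSpace.SeparableSpace E]
    [TopologicalSpace.SeparableSpace F]
    (T : H →L[ℂ] E) (V : H →L[ℂ] F) :
    (∃ G : H →L[ℂ] H, ∀ h : H, G h - h ∈ LinearMap.ker (V : H →ₗ[ℂ] F) ∧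
        ∀ z ∈ LinearMap.ker (V : H →ₗ[ℂ] F), ‖T (G h)‖ ≤ ‖T (h + z)‖) ↔
      LinearMap.ker (V : H →ₗ[ℂ] F) ⊔
        (Submodule.map ((ContinuousLinearMap.adjoint T ∘L T : H →L[ℂ] H) : H →ₗ[ℂ] H) (LinearMap.ker (V : H →ₗ[ℂ] F)))ᗮ = ⊤ :=
  stmt_10_general T V
end

section
/- Let T : H → E and V : H → F be bounded operators between separable Hilbert spaces. For f₀ ∈ F, the minimum min_{h ∈ H} (‖Th‖² + ‖Vh − f₀‖²) exists if and only if the equation (T*T + V*V)h = V*f₀ has a solution h ∈ H. Consequently, the minimum exists for every f₀ ∈ F if and only if R(V*) ⊆ R(T*T + V*V). -/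
/-!
For `J(h) = ‖T h‖² + ‖V h - f₀‖²` and `A = T*T + V*V`, expanding the squares gives
`J(h + u) = J(h) + 2 Re⟪A h - V* f₀, u⟫ + ‖T u‖² + ‖V u‖²`.
The quadratic term is nonnegative, so `h` minimizes `J` as soon as the linear term vanishes;
conversely, if `g = A h - V* f₀ ≠ 0`, moving from `h` a small distance `t` in the direction `-g`
changes `J` by `-2t‖g‖² + O(t²) < 0`.
-/

open ContinuousLinearMap RCLike

lemma nonpos_of_forall_pos_le_mul {a c : ℝ} (h : ∀ t : ℝ, 0 < t → a ≤ t * c) : a ≤ 0 := by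
  by_contra! ha
  have hc : 0 < c := by linarith [h 1 one_pos]
  have := h (a / (2 * c)) (by positivity)
  rw [div_mul_eq_mul_div, mul_div_mul_right _ _ hc.ne'] at this
  linarith

section Smoothing

variable {𝕜 H E F : Type*} [RCLike 𝕜]
  [NormedAddCommGroup H] [InnerProductSpace 𝕜 H] [CompleteSpace H]
  [NormedAddCommGroup E] [InnerProductSpace 𝕜 E] [CompleteSpace E]
  [NormedAddCommGroup F] [InnerProductSpace 𝕜 F] [CompleteSpace F]

def smoothingFunctional (T : H →L[𝕜] E) (V : H →L[𝕜] F) (f₀ : F) (h : H) : ℝ :=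
  ‖T h‖ ^ 2 + ‖V h - f₀‖ ^ 2

variable (T : H →L[𝕜] E) (V : H →L[𝕜] F) (f₀ : F)

lemma smoothingFunctional_add (h u : H) :
    smoothingFunctional T V f₀ (h + u) =
      smoothingFunctional T V f₀ h
        + 2 * re (inner 𝕜 ((adjoint T ∘L T + adjoint V ∘L V) h - adjoint V f₀) u)
        + (‖T u‖ ^ 2 + ‖V u‖ ^ 2) := by
  have hV : V (h + u) - f₀ = (V h - f₀) + V u := by rw [map_add]; abel
  have hre : re (inner 𝕜 ((adjoint T ∘L T + adjoint V ∘L V) h - adjoint V f₀) u)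
      = re (inner 𝕜 (T h) (T u)) + re (inner 𝕜 (V h - f₀) (V u)) := by
    simp only [add_apply, comp_apply, inner_sub_left, inner_add_left, adjoint_inner_left,
      map_add, map_sub, add_sub_assoc]
  rw [smoothingFunctional, smoothingFunctional, hV, map_add, norm_add_sq (𝕜 := 𝕜),
    norm_add_sq (𝕜 := 𝕜), hre]
  ring

lemma smoothingFunctional_add_smul (h g : H) (t : ℝ) :
    smoothingFunctional T V f₀ (h + (t : 𝕜) • g) =
      smoothingFunctional T V f₀ h
        - 2 * t * re (inner 𝕜 (adjoint V f₀ - (adjoint T ∘L T + adjoint V ∘L V) h) g)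
        + t ^ 2 * (‖T g‖ ^ 2 + ‖V g‖ ^ 2) := by
  rw [smoothingFunctional_add, ← neg_sub, inner_neg_left, map_neg, inner_smul_right,
    re_ofReal_mul, map_smul, map_smul, norm_smul, norm_smul, norm_ofReal]
  ring_nf
  rw [sq_abs]

theorem forall_smoothingFunctional_le_iff (h : H) :
    (∀ z, smoothingFunctional T V f₀ h ≤ smoothingFunctional T V f₀ z) ↔
      (adjoint T ∘L T + adjoint V ∘L V) h = adjoint V f₀ := by
  set g := adjoint V f₀ - (adjoint T ∘L T + adjoint V ∘L V) h
  constructor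
  · intro hmin
    have hdescent : ∀ t : ℝ, 0 < t → 2 * ‖g‖ ^ 2 ≤ t * (‖T g‖ ^ 2 + ‖V g‖ ^ 2) := by
      intro t ht
      have := hmin (h + (t : 𝕜) • g)
      rw [smoothingFunctional_add_smul, inner_self_eq_norm_sq] at this
      nlinarith
    have hg : g = 0 := by
      have := nonpos_of_forall_pos_le_mul hdescent
      exact norm_eq_zero.mp (by nlinarith [norm_nonneg g])
    exact (sub_eq_zero.mp hg).symm
  · intro hA z
    have := smoothingFunctional_add T V f₀ h (z - h)
    rw [hA, sub_self, inner_zero_left, add_sub_cancel] at this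
    rw [this]
    simp only [map_zero, mul_zero, add_zero, le_add_iff_nonneg_right]
    positivity

end Smoothing

theorem stmt_11_general {H E F : Type*} [NormedAddCommGroup H] [InnerProductSpace ℂ H] [CompleteSpace H]
    [NormedAddCommGroup E] [InnerProductSpace ℂ E] [CompleteSpace E]
    [NormedAddCommGroup F] [InnerProductSpace ℂ F] [CompleteSpace F]
    (T : H →L[ℂ] E) (V : H →L[ℂ] F) :
    (∀ f₀ : F,
      (∃ h : H, ∀ z : H, ‖T h‖ ^ 2 + ‖V h - f₀‖ ^ 2 ≤ ‖T z‖ ^ 2 + ‖V z - f₀‖ ^ 2) ↔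
        ∃ h : H, (ContinuousLinearMap.adjoint T ∘L T + ContinuousLinearMap.adjoint V ∘L V) h =
          ContinuousLinearMap.adjoint V f₀) ∧
    ((∀ f₀ : F, ∃ h : H, ∀ z : H,
        ‖T h‖ ^ 2 + ‖V h - f₀‖ ^ 2 ≤ ‖T z‖ ^ 2 + ‖V z - f₀‖ ^ 2) ↔
      LinearMap.range (ContinuousLinearMap.adjoint V : F →ₗ[ℂ] H) ≤
        LinearMap.range ((ContinuousLinearMap.adjoint T ∘L T +
          ContinuousLinearMap.adjoint V ∘L V : H →L[ℂ] H) : H →ₗ[ℂ] H)) := by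
  have hmin (f₀ : F) := fun h => forall_smoothingFunctional_le_iff T V f₀ h
  refine ⟨fun f₀ => exists_congr (hmin f₀), ⟨?_, ?_⟩⟩
  · rintro hall _ ⟨f₀, rfl⟩
    exact exists_congr (hmin f₀) |>.mp (hall f₀)
  · intro hrange f₀
    exact exists_congr (hmin f₀) |>.mpr (hrange ⟨f₀, rfl⟩)

/-- The smoothing problem `min (‖Th‖² + ‖Vh − f₀‖²)` has a solution iff the normal equation
`(T*T + V*V)h = V*f₀` is solvable; it is solvable for every `f₀` iff
`R(V*) ⊆ R(T*T + V*V)`. -/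
theorem stmt_11 {H E F : Type*} [NormedAddCommGroup H] [InnerProductSpace ℂ H] [CompleteSpace H]
    [NormedAddCommGroup E] [InnerProductSpace ℂ E] [CompleteSpace E]
    [NormedAddCommGroup F] [InnerProductSpace ℂ F] [CompleteSpace F]
    [TopologicalSpace.SeparableSpace H] [TopologicalSpace.SeparableSpace E]
    [TopologicalSpace.SeparableSpace F]
    (T : H →L[ℂ] E) (V : H →L[ℂ] F) :
    (∀ f₀ : F,
      (∃ h : H, ∀ z : H, ‖T h‖ ^ 2 + ‖V h - f₀‖ ^ 2 ≤ ‖T z‖ ^ 2 + ‖V z - f₀‖ ^ 2) ↔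
        ∃ h : H, (ContinuousLinearMap.adjoint T ∘L T + ContinuousLinearMap.adjoint V ∘L V) h =
          ContinuousLinearMap.adjoint V f₀) ∧
    ((∀ f₀ : F, ∃ h : H, ∀ z : H,
        ‖T h‖ ^ 2 + ‖V h - f₀‖ ^ 2 ≤ ‖T z‖ ^ 2 + ‖V z - f₀‖ ^ 2) ↔
      LinearMap.range (ContinuousLinearMap.adjoint V : F →ₗ[ℂ] H) ≤
        LinearMap.range ((ContinuousLinearMap.adjoint T ∘L T +
          ContinuousLinearMap.adjoint V ∘L V : H →L[ℂ] H) : H →ₗ[ℂ] H)) :=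
  stmt_11_general T V
end

section
/- Let T : H → E and V : H → F be bounded operators with R(V*) ⊆ R(T*T + V*V). Then there exists a bounded operator G : F → H such that ‖TGf‖² + ‖VGf − f‖² = min_{h∈H} (‖Th‖² + ‖Vh − f‖²) for every f ∈ F (a bounded global solution of the smoothing problem). -/
/-!
The functional `h ↦ ‖T h‖² + ‖V h - f‖²` is minimised by every solution of the normal equation
`(T*T + V*V) h = V* f`: the equation makes the cross terms vanish, leaving a Pythagoras identity.
So it suffices to factor `V* = (T*T + V*V) ∘ G` with `G` bounded, which is Douglas' lemma. On the
orthogonal complement of its kernel, `S = T*T + V*V` is injective with the same range, so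
`S⁻¹ ∘ V*` is a well-defined linear map there, and it is bounded by the closed graph theorem.
-/

namespace ContinuousLinearMap

section Factorization

variable {𝕜 H E F : Type*} [NontriviallyNormedField 𝕜]
  [NormedAddCommGroup H] [NormedSpace 𝕜 H] [CompleteSpace H]
  [NormedAddCommGroup E] [NormedSpace 𝕜 E]
  [NormedAddCommGroup F] [NormedSpace 𝕜 F] [CompleteSpace F]

theorem exists_comp_eq_of_injective_of_range_le {S : H →L[𝕜] E}
    (hS : Function.Injective S) {A : F →L[𝕜] E} (hA : A.range ≤ S.range) :
    ∃ X : F →L[𝕜] H, S ∘L X = A := by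
  let X : F →ₗ[𝕜] H := (LinearEquiv.ofInjective (S : H →ₗ[𝕜] E) hS).symm.toLinearMap ∘ₗ
    (A : F →ₗ[𝕜] E).codRestrict _ fun f => hA ⟨f, rfl⟩
  have hSX : ∀ f, S (X f) = A f := fun f => LinearEquiv.ofInjective_symm_apply (h := hS) _ _
  have hgraph : (X.graph : Set (F × H)) = {p | S p.2 = A p.1} := by
    ext p
    rw [SetLike.mem_coe, LinearMap.mem_graph_iff, Set.mem_ofPred_eq, ← hSX, hS.eq_iff]
  refine ⟨⟨X, X.continuous_of_isClosed_graph ?_⟩, ext hSX⟩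
  rw [hgraph]
  exact isClosed_eq (S.continuous.comp continuous_snd) (A.continuous.comp continuous_fst)

end Factorization

section Hilbert

variable {𝕜 H E F : Type*} [RCLike 𝕜]
  [NormedAddCommGroup H] [InnerProductSpace 𝕜 H]
  [NormedAddCommGroup E] [NormedSpace 𝕜 E]

theorem injective_comp_subtypeL_ker_orthogonal (S : H →L[𝕜] E) :
    Function.Injective (S ∘L S.kerᗮ.subtypeL) := by
  refine (injective_iff_map_eq_zero _).2 fun x hx => ?_
  have hmem : (x : H) ∈ S.ker ⊓ S.kerᗮ := ⟨hx, x.2⟩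
  rw [Submodule.inf_orthogonal_eq_bot, Submodule.mem_bot] at hmem
  exact Subtype.ext hmem

variable [CompleteSpace H]

theorem range_comp_subtypeL_ker_orthogonal (S : H →L[𝕜] E) :
    (S ∘L S.kerᗮ.subtypeL).range = S.range := by
  refine le_antisymm (LinearMap.range_comp_le_range _ _) ?_
  rintro _ ⟨h, rfl⟩
  let K := S.ker
  refine ⟨⟨h - K.starProjection h, K.sub_starProjection_mem_orthogonal h⟩, ?_⟩
  have hK : S (K.starProjection h) = 0 := (K.orthogonalProjectionOnto h).2
  simp [hK]

variable [NormedAddCommGroup F] [NormedSpace 𝕜 F] [CompleteSpace F]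

/-- Douglas' lemma. -/
theorem exists_comp_eq_of_range_le {S : H →L[𝕜] E} {A : F →L[𝕜] E}
    (hA : A.range ≤ S.range) : ∃ X : F →L[𝕜] H, S ∘L X = A := by
  obtain ⟨X, hX⟩ := exists_comp_eq_of_injective_of_range_le
    (injective_comp_subtypeL_ker_orthogonal S)
    (hA.trans (range_comp_subtypeL_ker_orthogonal S).ge)
  exact ⟨S.kerᗮ.subtypeL ∘L X, by rw [← comp_assoc, hX]⟩

end Hilbert

theorem norm_sq_add_norm_sub_sq_eq_of_normal_eq {𝕜 H E F : Type*} [RCLike 𝕜]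
    [NormedAddCommGroup H] [InnerProductSpace 𝕜 H] [CompleteSpace H]
    [NormedAddCommGroup E] [InnerProductSpace 𝕜 E] [CompleteSpace E]
    [NormedAddCommGroup F] [InnerProductSpace 𝕜 F] [CompleteSpace F]
    (T : H →L[𝕜] E) (V : H →L[𝕜] F) {f : F} {g : H}
    (hg : (adjoint T ∘L T + adjoint V ∘L V) g = adjoint V f) (h : H) :
    ‖T h‖ ^ 2 + ‖V h - f‖ ^ 2 =
      ‖T g‖ ^ 2 + ‖V g - f‖ ^ 2 + (‖T (h - g)‖ ^ 2 + ‖V (h - g)‖ ^ 2) := by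
  set d := h - g
  have hT : T h = T g + T d := by simp only [d, map_sub]; abel
  have hV : V h - f = (V g - f) + V d := by simp only [d, map_sub]; abel
  have cross : RCLike.re (inner 𝕜 (T g) (T d)) + RCLike.re (inner 𝕜 (V g - f) (V d)) = 0 := by
    rw [← map_add, ← adjoint_inner_left, ← adjoint_inner_left, ← inner_add_left, map_sub,
      ← add_sub_assoc]
    have : adjoint T (T g) + adjoint V (V g) - adjoint V f = 0 := by simpa [sub_eq_zero] using hg
    rw [this, inner_zero_left, map_zero]
  rw [hT, hV, norm_add_sq (𝕜 := 𝕜), norm_add_sq (𝕜 := 𝕜)]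
  linear_combination 2 * cross

end ContinuousLinearMap

open ContinuousLinearMap

theorem stmt_12_general {H E F : Type*} [NormedAddCommGroup H] [InnerProductSpace ℂ H] [CompleteSpace H]
    [NormedAddCommGroup E] [InnerProductSpace ℂ E] [CompleteSpace E]
    [NormedAddCommGroup F] [InnerProductSpace ℂ F] [CompleteSpace F]
    (T : H →L[ℂ] E) (V : H →L[ℂ] F)
    (hr : LinearMap.range (ContinuousLinearMap.adjoint V : F →ₗ[ℂ] H) ≤
      LinearMap.range ((ContinuousLinearMap.adjoint T ∘L T + ContinuousLinearMap.adjoint V ∘L V :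
        H →L[ℂ] H) : H →ₗ[ℂ] H)) :
    ∃ G : F →L[ℂ] H, ∀ (f : F) (h : H),
      ‖T (G f)‖ ^ 2 + ‖V (G f) - f‖ ^ 2 ≤ ‖T h‖ ^ 2 + ‖V h - f‖ ^ 2 := by
  obtain ⟨G, hG⟩ := exists_comp_eq_of_range_le hr
  refine ⟨G, fun f h => ?_⟩
  rw [norm_sq_add_norm_sub_sq_eq_of_normal_eq T V (DFunLike.congr_fun hG f) h]
  exact le_add_of_nonneg_right (by positivity)

/-- If `R(V*) ⊆ R(T*T + V*V)` then the smoothing problem has a bounded global solution. -/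
theorem stmt_12 {H E F : Type*} [NormedAddCommGroup H] [InnerProductSpace ℂ H] [CompleteSpace H]
    [NormedAddCommGroup E] [InnerProductSpace ℂ E] [CompleteSpace E]
    [NormedAddCommGroup F] [InnerProductSpace ℂ F] [CompleteSpace F]
    [TopologicalSpace.SeparableSpace H] [TopologicalSpace.SeparableSpace E]
    [TopologicalSpace.SeparableSpace F]
    (T : H →L[ℂ] E) (V : H →L[ℂ] F)
    (hr : LinearMap.range (ContinuousLinearMap.adjoint V : F →ₗ[ℂ] H) ≤
      LinearMap.range ((ContinuousLinearMap.adjoint T ∘L T + ContinuousLinearMap.adjoint V ∘L V :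
        H →L[ℂ] H) : H →ₗ[ℂ] H)) :
    ∃ G : F →L[ℂ] H, ∀ (f : F) (h : H),
      ‖T (G f)‖ ^ 2 + ‖V (G f) - f‖ ^ 2 ≤ ‖T h‖ ^ 2 + ‖V h - f‖ ^ 2 :=
  stmt_12_general T V hr
end

section
/- Let A : H → F be bounded, w : H → H positive semidefinite. If R(A*A) ⊆ R(A*A + w), then R(A*A) + R(w) = R(A*A + w), and in particular R(w) ⊆ R(A*A + w). -/
namespace LinearMap

variable {R M M₂ : Type*} [Ring R] [AddCommGroup M] [Module R M] [AddCommGroup M₂] [Module R M₂]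
  {f g : M →ₗ[R] M₂}

theorem range_le_range_add_of_range_le (h : range f ≤ range (f + g)) :
    range g ≤ range (f + g) := by
  rintro _ ⟨x, rfl⟩
  have hgx : g x = (f + g) x - f x := by simp
  rw [hgx]
  exact sub_mem (mem_range_self _ x) (h (mem_range_self f x))

theorem range_sup_range_eq_range_add_of_range_le (h : range f ≤ range (f + g)) :
    range f ⊔ range g = range (f + g) :=
  le_antisymm (sup_le h (range_le_range_add_of_range_le h)) (range_add_le f g)

end LinearMap

theorem stmt_16_general {H F : Type*} [NormedAddCommGroup H] [InnerProductSpace ℂ H] [CompleteSpace H]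
    [NormedAddCommGroup F] [InnerProductSpace ℂ F] [CompleteSpace F]
    (A : H →L[ℂ] F) (w : H →L[ℂ] H)
    (h : LinearMap.range (ContinuousLinearMap.adjoint A ∘L A : H →ₗ[ℂ] H) ≤
      LinearMap.range (ContinuousLinearMap.adjoint A ∘L A + w : H →ₗ[ℂ] H)) :
    LinearMap.range (ContinuousLinearMap.adjoint A ∘L A : H →ₗ[ℂ] H) ⊔ LinearMap.range (w : H →ₗ[ℂ] H) =
        LinearMap.range (ContinuousLinearMap.adjoint A ∘L A + w : H →ₗ[ℂ] H) ∧
      LinearMap.range (w : H →ₗ[ℂ] H) ≤ LinearMap.range (ContinuousLinearMap.adjoint A ∘L A + w : H →ₗ[ℂ] H) := by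
  exact ⟨LinearMap.range_sup_range_eq_range_add_of_range_le h,
    LinearMap.range_le_range_add_of_range_le h⟩

/-- If `R(A*A) ⊆ R(A*A + w)` then `R(A*A) + R(w) = R(A*A + w)`; in particular
`R(w) ⊆ R(A*A + w)`. -/
theorem stmt_16 {H F : Type*} [NormedAddCommGroup H] [InnerProductSpace ℂ H] [CompleteSpace H]
    [NormedAddCommGroup F] [InnerProductSpace ℂ F] [CompleteSpace F]
    (A : H →L[ℂ] F) (w : H →L[ℂ] H) (hw : w.IsPositive)
    (h : LinearMap.range (ContinuousLinearMap.adjoint A ∘L A : H →ₗ[ℂ] H) ≤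
      LinearMap.range (ContinuousLinearMap.adjoint A ∘L A + w : H →ₗ[ℂ] H)) :
    LinearMap.range (ContinuousLinearMap.adjoint A ∘L A : H →ₗ[ℂ] H) ⊔ LinearMap.range (w : H →ₗ[ℂ] H) =
        LinearMap.range (ContinuousLinearMap.adjoint A ∘L A + w : H →ₗ[ℂ] H) ∧
      LinearMap.range (w : H →ₗ[ℂ] H) ≤ LinearMap.range (ContinuousLinearMap.adjoint A ∘L A + w : H →ₗ[ℂ] H) :=
  stmt_16_general A w h
end

section
/- Let W : F → F be positive semidefinite with infinite-dimensional kernel N(W), and let A = P + A₂P', where P is the orthogonal projection onto N(W)^⊥, P' the orthogonal projection onto N(W), and A₂ : N(W) → N(W) a bounded operator with non-closed range (extended by 0 on N(W)^⊥). Then R(A) + W(R(A))^⊥ = F even though R(A) is not closed; i.e. A admits a W-inverse without having closed range. -/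
/-!
On `N(W)ᗮ` the operator `A` is the identity, so `N(W)ᗮ ≤ R(A)`; since `W` is symmetric,
`N(W) = R(W)ᗮ ≤ W(R(A))ᗮ`, and `N(W) ⊔ N(W)ᗮ = F`. On the other hand `A` respects the
decomposition `F = N(W) ⊕ N(W)ᗮ`, so `A(N(W)) = R(A) ∩ N(W)`: were `R(A)` closed, so would be
`A(N(W))`.
-/

theorem Submodule.map_eq_range_inf_of_isCompl {R M : Type*} [Ring R] [AddCommGroup M]
    [Module R M] {K L : Submodule R M} (hKL : IsCompl K L) {A : M →ₗ[R] M}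
    (hL : ∀ x ∈ L, A x = x) (hK : ∀ x ∈ K, A x ∈ K) :
    K.map A = LinearMap.range A ⊓ K := by
  refine le_antisymm (le_inf LinearMap.map_le_range (Submodule.map_le_iff_le_comap.2 hK)) ?_
  rintro _ ⟨⟨x, rfl⟩, hAx⟩
  obtain ⟨p, hp, q, hq, rfl⟩ := Submodule.mem_sup.1 (hKL.sup_eq_top ▸ Submodule.mem_top (x := x))
  have hAq : A (p + q) = A p + q := by rw [map_add, hL q hq]
  have hqK : q ∈ K := by simpa [hAq] using K.sub_mem hAx (hK p hp)
  have hq0 : q = 0 := (Submodule.disjoint_def.1 hKL.disjoint) q hqK hq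
  exact ⟨p, hp, by rw [hq0, add_zero]⟩

theorem LinearMap.IsSymmetric.ker_le_orthogonal_map {𝕜 E : Type*} [RCLike 𝕜]
    [NormedAddCommGroup E] [InnerProductSpace 𝕜 E] {T : E →ₗ[𝕜] E} (hT : T.IsSymmetric)
    (S : Submodule 𝕜 E) : LinearMap.ker T ≤ (S.map T)ᗮ :=
  hT.orthogonal_range ▸ Submodule.orthogonal_le LinearMap.map_le_range

theorem stmt_18_general {F : Type*} [NormedAddCommGroup F] [InnerProductSpace ℂ F] [CompleteSpace F]
    (W : F →L[ℂ] F) (hW : W.IsPositive)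
    (A : F →L[ℂ] F)
    (hA1 : ∀ x ∈ (LinearMap.ker (W : F →ₗ[ℂ] F) : Submodule ℂ F)ᗮ, A x = x)
    (hA2 : ∀ x ∈ LinearMap.ker (W : F →ₗ[ℂ] F), A x ∈ LinearMap.ker (W : F →ₗ[ℂ] F))
    (hA3 : ¬ IsClosed (A '' ((LinearMap.ker (W : F →ₗ[ℂ] F) : Submodule ℂ F) : Set F))) :
    LinearMap.range (A : F →ₗ[ℂ] F) ⊔ (Submodule.map (W : F →ₗ[ℂ] F) (LinearMap.range (A : F →ₗ[ℂ] F)))ᗮ = ⊤ ∧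
      ¬ IsClosed ((LinearMap.range (A : F →ₗ[ℂ] F) : Submodule ℂ F) : Set F) := by
  set N : Submodule ℂ F := LinearMap.ker (W : F →ₗ[ℂ] F)
  have hNclosed : IsClosed (N : Set F) := ContinuousLinearMap.isClosed_ker W
  have : CompleteSpace N := hNclosed.completeSpace_coe
  have hNperp : Nᗮ ≤ LinearMap.range (A : F →ₗ[ℂ] F) := fun x hx => ⟨x, hA1 x hx⟩
  refine ⟨top_unique ?_, fun hclosed => hA3 ?_⟩
  · rw [← N.isCompl_orthogonal.symm.sup_eq_top]
    exact sup_le_sup hNperp (hW.isSymmetric.ker_le_orthogonal_map _)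
  · change IsClosed (N.map (A : F →ₗ[ℂ] F) : Set F)
    rw [N.map_eq_range_inf_of_isCompl N.isCompl_orthogonal hA1 hA2]
    exact hclosed.inter hNclosed

/-- An operator that is the identity on `N(W)ᗮ` and maps `N(W)` into `N(W)` with non-closed
range there admits a `W`-inverse (i.e. `R(A) + W(R(A))^⊥ = F`) without having closed range. -/
theorem stmt_18 {F : Type*} [NormedAddCommGroup F] [InnerProductSpace ℂ F] [CompleteSpace F]
    [TopologicalSpace.SeparableSpace F]
    (W : F →L[ℂ] F) (hW : W.IsPositive)
    (hker : ¬ FiniteDimensional ℂ (LinearMap.ker (W : F →ₗ[ℂ] F)))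
    (A : F →L[ℂ] F)
    (hA1 : ∀ x ∈ (LinearMap.ker (W : F →ₗ[ℂ] F) : Submodule ℂ F)ᗮ, A x = x)
    (hA2 : ∀ x ∈ LinearMap.ker (W : F →ₗ[ℂ] F), A x ∈ LinearMap.ker (W : F →ₗ[ℂ] F))
    (hA3 : ¬ IsClosed (A '' ((LinearMap.ker (W : F →ₗ[ℂ] F) : Submodule ℂ F) : Set F))) :
    LinearMap.range (A : F →ₗ[ℂ] F) ⊔ (Submodule.map (W : F →ₗ[ℂ] F) (LinearMap.range (A : F →ₗ[ℂ] F)))ᗮ = ⊤ ∧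
      ¬ IsClosed ((LinearMap.range (A : F →ₗ[ℂ] F) : Submodule ℂ F) : Set F) :=
  stmt_18_general W hW A hA1 hA2 hA3
end
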